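/- For each i ∈ {1,…,6}, let V_i be the admissible Wilson loop diagram with propagators (i,i+2) and (i,i+4) (indices mod 6). There exists a positroid B of rank 2 on {1,…,6} that is maximal among positroids properly contained in B(V_i), such that B is not contained in B(W) for any admissible Wilson loop diagram W with 2 propagators on 6 vertices satisfying B(W) ≠ B(V_i). (That is, each cell Σ(V_i) has a codimension-one boundary cell in G≥0(2,6) that is shared with no other Wilson loop diagram cell; in particular W(2,6) is not the full 6-skeleton of G≥0(2,6).) -/

import Mathlib

/-! Core combinatorial definitions for Wilson loop diagrams with 2 propagators on 6 vertices.
Vertices and edges of the hexagon are labelled by `Fin 6` (cyclically; edge `i` joins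
vertices `i` and `i+1`). -/

namespace WLD

/-- Vertices / edges of the hexagon. -/
abbrev V : Type := Fin 6

/-- The support of a propagator `p = {i, j}` (a pair of edges): `{i, i+1, j, j+1}`. -/
def supp (p : Finset V) : Finset V := p ∪ p.image (· + 1)

/-- Two propagators cross iff their edge pairs interleave in the cyclic order. -/
def Crossing (p q : Finset V) : Prop :=
  ∃ a b c d : V, a < b ∧ b < c ∧ c < d ∧
    ((p = {a, c} ∧ q = {b, d}) ∨ (p = {b, d} ∧ q = {a, c}))

/-- A Wilson loop diagram with 2 propagators on 6 vertices: a set of two distinct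
propagators, each of which is a pair of distinct edges. -/
def IsWLD (P : Finset (Finset V)) : Prop :=
  P.card = 2 ∧ ∀ p ∈ P, p.card = 2

/-- Admissibility: `|V_Q| ≥ |Q| + 3` for every nonempty subset of propagators, and
no two propagators cross. -/
def Admissible (P : Finset (Finset V)) : Prop :=
  IsWLD P ∧
  (∀ Q ⊆ P, Q.Nonempty → Q.card + 3 ≤ (Q.biUnion supp).card) ∧
  (∀ p ∈ P, ∀ q ∈ P, ¬ Crossing p q)

/-- The matrix `C(W)` associated to the (ordered) pair of propagators `(p, q)`,
with real parameters `c` in the support entries and `0` elsewhere. -/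
def Cmat (p q : Finset V) (c : Fin 2 → V → ℝ) : Matrix (Fin 2) V ℝ :=
  Matrix.of fun b a => if a ∈ supp (if b = 0 then p else q) then c b a else 0

/-- The `2×2` minor of a `2×6` matrix on columns `a`, `b`. -/
def mnr (M : Matrix (Fin 2) V ℝ) (a b : V) : ℝ := M 0 a * M 1 b - M 0 b * M 1 a

/-- The positroid `B(W)` of a Wilson loop diagram: the 2-element column sets on which
the minor of `C(W)` is not identically zero (i.e. nonzero for some parameter values). -/
def BW (P : Finset (Finset V)) : Set (Finset V) :=
  { I | ∃ p ∈ P, ∃ q ∈ P, p ≠ q ∧ ∃ a b : V, a < b ∧ I = {a, b} ∧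
        ∃ c : Fin 2 → V → ℝ, mnr (Cmat p q c) a b ≠ 0 }

/-- `M` is totally nonnegative (all `2×2` minors, in the column order, nonnegative). -/
def TNN (M : Matrix (Fin 2) V ℝ) : Prop := ∀ a b : V, a < b → 0 ≤ mnr M a b

/-- The set of nonvanishing maximal minors of `M` is exactly `B`. -/
def IsRep (B : Set (Finset V)) (M : Matrix (Fin 2) V ℝ) : Prop :=
  ∀ a b : V, a < b → (mnr M a b ≠ 0 ↔ ({a, b} : Finset V) ∈ B)

/-- A positroid of rank 2 on the 6 columns: a nonempty collection of 2-element subsets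
realizable as the set of nonvanishing maximal minors of a rank-2 totally nonnegative
real `2×6` matrix. -/
def IsPositroid (B : Set (Finset V)) : Prop :=
  B.Nonempty ∧ (∀ I ∈ B, I.card = 2) ∧
  ∃ M : Matrix (Fin 2) V ℝ, M.rank = 2 ∧ TNN M ∧ IsRep B M

/-- `B` is maximal among positroids properly contained in `B₀`. -/
def MaxProperSub (B B₀ : Set (Finset V)) : Prop :=
  IsPositroid B ∧ B ⊂ B₀ ∧
  ∀ B' : Set (Finset V), IsPositroid B' → B' ⊂ B₀ → B ⊆ B' → B' = B

/-! ### Boundaries of Wilson loop diagrams -/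

/-- The smaller endpoint (edge) of a propagator. -/
def e1 (p : Finset V) : V := p.min.untopD 0
/-- The larger endpoint (edge) of a propagator. -/
def e2 (p : Finset V) : V := p.max.unbotD 0

/-- The edge of `p` on which the support vertex `v` lies. -/
def edgeOf (p : Finset V) (v : V) : V :=
  if v = e1 p ∨ v = e1 p + 1 then e1 p else e2 p

/-- The endpoint of `p` other than `e`. -/
def oth (p : Finset V) (e : V) : V := if e1 p = e then e2 p else e1 p

/-- `p` is attached nearer to vertex `e` than `q` on the shared edge `e`
(in the non-crossing arrangement this means the other endpoint of `p` is
counterclockwise-further from `e`). -/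
def NearerE (p q : Finset V) (e : V) : Prop :=
  (oth q e - e).val < (oth p e - e).val

instance (p q : Finset V) (e : V) : Decidable (NearerE p q e) :=
  inferInstanceAs (Decidable (_ < _))

/-- The boundary move of `p` away from `v` collides with the other propagator `q`
(both end on the edge of `p` containing `v`, and `q`'s endpoint is in the way). -/
def IsCollision (p q : Finset V) (v : V) : Prop :=
  edgeOf p v ∈ q ∧
    ((v = edgeOf p v ∧ NearerE p q (edgeOf p v)) ∨
     (v = edgeOf p v + 1 ∧ NearerE q p (edgeOf p v)))

instance (p q : Finset V) (v : V) : Decidable (IsCollision p q v) :=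
  inferInstanceAs (Decidable (_ ∧ _))

/-- The other propagator of a two-propagator diagram. -/
noncomputable def otherProp (P : Finset (Finset V)) (p : Finset V) : Finset V :=
  if h : ∃ q, q ∈ P ∧ q ≠ p then h.choose else ∅

/-- The boundary `∂_{p,v}` of the diagram `{p, q}` is degenerate: this happens in the
vertex-removal case when the resulting diagram violates the support inequality. -/
def DegenerateB (p q : Finset V) (v : V) : Prop :=
  ¬ IsCollision p q v ∧ (((supp p).erase v) ∪ supp q).card < 5

/-- Degeneracy of the boundary `∂_{p,v}` of the diagram `P`. -/
def Degenerate (P : Finset (Finset V)) (p : Finset V) (v : V) : Prop :=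
  DegenerateB p (otherProp P p) v

/-- The positroid of the parameter family of matrices with supports given by `(p, q)`
subject to the constraint `cond`. -/
def BofFam (p q : Finset V) (cond : (Fin 2 → V → ℝ) → Prop) : Set (Finset V) :=
  { I | ∃ a b : V, a < b ∧ I = {a, b} ∧
        ∃ c : Fin 2 → V → ℝ, cond c ∧ mnr (Cmat p q c) a b ≠ 0 }

/-- The boundary positroid `B(∂_{p,v}W)` for the diagram `{p, q}`: in the collision
case the `2×2` minor on the columns of the shared edge is set to zero; in the
vertex-removal case the entry of `p` in column `v` is set to zero. -/
def BofBd (p q : Finset V) (v : V) : Set (Finset V) :=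
  BofFam p q fun c =>
    if IsCollision p q v then mnr (Cmat p q c) (edgeOf p v) (edgeOf p v + 1) = 0
    else c 0 v = 0

/-- The boundary positroid `B(∂_{p,v}W)` of the diagram `P` at `(p, v)`. -/
noncomputable def BofB (P : Finset (Finset V)) (p : Finset V) (v : V) : Set (Finset V) :=
  BofBd p (otherProp P p) v

end WLD


namespace WLD

/-- The diagram `V_i` with propagators `(i, i+2)` and `(i, i+4)`. -/
def Vdiag (i : V) : Finset (Finset V) := {{i, i + 2}, {i, i + 4}}

end WLD

/-!
The boundary cell is the positroid of all pairs meeting `{i, i+1}`: in its representing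
matrix the columns `i+2, …, i+5` are parallel. `B(V_i)` misses exactly `{i+2, i+3}` and
`{i+4, i+5}`, so in any positroid between the two these pairs are parallel classes, and the
three-term Plücker relation turns one nonvanishing minor across the classes into all four;
hence the boundary cell is maximal.

For `W = {p, q}`, `B(W)` consists of the pairs with one point in each support. Supports have
at most four points, so if `B(W)` contains every pair through `i` and through `i+1`, both
supports contain `i` and `i+1` and together cover the hexagon. The only such diagrams are
`V_i` and the crossing diagram `{(i, i+3), (i+1, i+5)}`.
-/

namespace WLD

section CrossPairs

variable {α : Type*} [DecidableEq α] [Fintype α]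

def crossPairs (s t : Finset α) : Finset (Finset α) :=
  Finset.univ.filter fun I => ∃ a ∈ s, ∃ b ∈ t, a ≠ b ∧ I = {a, b}

variable {s t : Finset α}

theorem mem_crossPairs {I : Finset α} :
    I ∈ crossPairs s t ↔ ∃ a ∈ s, ∃ b ∈ t, a ≠ b ∧ I = {a, b} := by
  simp [crossPairs]

theorem crossPairs_comm (s t : Finset α) : crossPairs s t = crossPairs t s := by
  ext I
  simp only [mem_crossPairs]
  constructor <;>
  · rintro ⟨a, ha, b, hb, hab, rfl⟩
    exact ⟨b, hb, a, ha, hab.symm, Finset.pair_comm a b⟩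

theorem card_eq_two_of_mem_crossPairs {I : Finset α} (h : I ∈ crossPairs s t) : I.card = 2 := by
  obtain ⟨a, -, b, -, hab, rfl⟩ := mem_crossPairs.1 h
  exact Finset.card_pair hab

theorem mem_union_of_pair_mem_crossPairs {c j : α} (h : {c, j} ∈ crossPairs s t) :
    j ∈ s ∪ t := by
  obtain ⟨a, ha, b, hb, -, hI⟩ := mem_crossPairs.1 h
  have hj : j ∈ ({a, b} : Finset α) := hI ▸ by simp
  simp only [Finset.mem_insert, Finset.mem_singleton] at hj
  rcases hj with rfl | rfl
  · exact Finset.mem_union_left t ha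
  · exact Finset.mem_union_right s hb

theorem mem_of_forall_pair_mem_crossPairs {c : α} (ht : t.card + 2 ≤ Fintype.card α)
    (h : ∀ j ≠ c, {c, j} ∈ crossPairs s t) : c ∈ t := by
  by_contra hc
  have hsub : Finset.univ.erase c ⊆ t := by
    intro j hj
    obtain ⟨a, -, b, hb, -, hI⟩ := mem_crossPairs.1 (h j (Finset.ne_of_mem_erase hj))
    have hb' : b ∈ ({c, j} : Finset α) := hI ▸ by simp
    simp only [Finset.mem_insert, Finset.mem_singleton] at hb'
    rcases hb' with rfl | rfl
    · exact absurd hb hc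
    · exact hb
  have := Finset.card_le_card hsub
  rw [Finset.card_erase_of_mem (Finset.mem_univ c), Finset.card_univ] at this
  omega

theorem mem_inter_of_forall_pair_mem_crossPairs {c : α} (hs : s.card + 2 ≤ Fintype.card α)
    (ht : t.card + 2 ≤ Fintype.card α) (h : ∀ j ≠ c, {c, j} ∈ crossPairs s t) : c ∈ s ∩ t :=
  Finset.mem_inter.2
    ⟨mem_of_forall_pair_mem_crossPairs hs fun j hj => crossPairs_comm s t ▸ h j hj,
      mem_of_forall_pair_mem_crossPairs ht h⟩

theorem union_eq_univ_of_forall_pair_mem_crossPairs {c : α} (hc : c ∈ s)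
    (h : ∀ j ≠ c, {c, j} ∈ crossPairs s t) : s ∪ t = Finset.univ :=
  Finset.eq_univ_of_forall fun j =>
    if hj : j = c then hj ▸ Finset.mem_union_left t hc
    else mem_union_of_pair_mem_crossPairs (h j hj)

end CrossPairs

theorem exists_mnr_Cmat_ne_zero_iff (p q : Finset V) {a b : V} (hab : a ≠ b) :
    (∃ c, mnr (Cmat p q c) a b ≠ 0) ↔
      (a ∈ supp p ∧ b ∈ supp q) ∨ (b ∈ supp p ∧ a ∈ supp q) := by
  constructor
  · rintro ⟨c, hc⟩
    by_contra h
    simp only [not_or, not_and_or] at h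
    apply hc
    simp only [mnr, Cmat, Matrix.of_apply, if_neg one_ne_zero]
    rcases h with ⟨h1 | h1, h2 | h2⟩ <;> simp [h1, h2]
  · rintro (⟨ha, hb⟩ | ⟨hb, ha⟩)
    · refine ⟨fun r v => if (r = 0 ∧ v = a) ∨ (r = 1 ∧ v = b) then 1 else 0, ?_⟩
      simp [mnr, Cmat, ha, hb, hab, hab.symm]
    · refine ⟨fun r v => if (r = 0 ∧ v = b) ∨ (r = 1 ∧ v = a) then 1 else 0, ?_⟩
      simp [mnr, Cmat, ha, hb, hab, hab.symm]

theorem BW_pair {p q : Finset V} (hpq : p ≠ q) :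
    BW {p, q} = ↑(crossPairs (supp p) (supp q)) := by
  ext I
  simp only [BW, Set.mem_ofPred_eq, Finset.mem_coe, mem_crossPairs]
  constructor
  · rintro ⟨p', hp', q', hq', hne, a, b, hab, rfl, hc⟩
    have hd := (exists_mnr_Cmat_ne_zero_iff p' q' hab.ne).1 hc
    simp only [Finset.mem_insert, Finset.mem_singleton] at hp' hq'
    rcases hp' with rfl | rfl <;> rcases hq' with rfl | rfl
    · exact absurd rfl hne
    · rcases hd with ⟨ha, hb⟩ | ⟨hb, ha⟩
      · exact ⟨a, ha, b, hb, hab.ne, rfl⟩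
      · exact ⟨b, hb, a, ha, hab.ne', Finset.pair_comm a b⟩
    · rcases hd with ⟨ha, hb⟩ | ⟨hb, ha⟩
      · exact ⟨b, hb, a, ha, hab.ne', Finset.pair_comm a b⟩
      · exact ⟨a, ha, b, hb, hab.ne, rfl⟩
    · exact absurd rfl hne
  · rintro ⟨a, ha, b, hb, hab, rfl⟩
    refine ⟨p, by simp, q, by simp, hpq, ?_⟩
    rcases hab.lt_or_gt with h | h
    · exact ⟨a, b, h, rfl, (exists_mnr_Cmat_ne_zero_iff p q h.ne).2 (Or.inl ⟨ha, hb⟩)⟩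
    · exact ⟨b, a, h, Finset.pair_comm a b,
        (exists_mnr_Cmat_ne_zero_iff p q h.ne).2 (Or.inr ⟨ha, hb⟩)⟩

section Minors

variable {M : Matrix (Fin 2) V ℝ}

theorem mnr_swap (M : Matrix (Fin 2) V ℝ) (a b : V) : mnr M b a = -mnr M a b := by
  unfold mnr; ring

theorem mnr_self (M : Matrix (Fin 2) V ℝ) (a : V) : mnr M a a = 0 := by
  unfold mnr; ring

theorem mnr_plucker (M : Matrix (Fin 2) V ℝ) (x y z w : V) :
    mnr M x y * mnr M z w - mnr M x z * mnr M y w + mnr M x w * mnr M y z = 0 := by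
  unfold mnr; ring

/-- `hc` only serves to say that the column `a'` is nonzero. -/
theorem mnr_ne_zero_of_parallel {a a' b c : V} (hc : mnr M c a' ≠ 0) (hpar : mnr M a' a = 0)
    (h : mnr M a b ≠ 0) : mnr M a' b ≠ 0 := by
  have key : mnr M c a' * mnr M a b = mnr M c a * mnr M a' b := by
    linear_combination mnr_plucker M c a' a b - mnr M c b * hpar
  intro h0
  rw [h0, mul_zero] at key
  exact mul_ne_zero hc h key

theorem mnr_ne_zero_of_parallel_classes {S T : Finset V} {c : V}
    (hS : ∀ s ∈ S, mnr M c s ≠ 0) (hT : ∀ t ∈ T, mnr M c t ≠ 0)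
    (hSS : ∀ s ∈ S, ∀ s' ∈ S, mnr M s s' = 0) (hTT : ∀ t ∈ T, ∀ t' ∈ T, mnr M t t' = 0)
    {s s' t t' : V} (hs : s ∈ S) (hs' : s' ∈ S) (ht : t ∈ T) (ht' : t' ∈ T)
    (h : mnr M s t ≠ 0) : mnr M s' t' ≠ 0 := by
  have h₁ : mnr M s' t ≠ 0 := mnr_ne_zero_of_parallel (hS s' hs') (hSS s' hs' s hs) h
  have h₂ : mnr M t' s' ≠ 0 := by
    refine mnr_ne_zero_of_parallel (hT t' ht') (hTT t' ht' t ht) ?_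
    rwa [mnr_swap, neg_ne_zero]
  rwa [mnr_swap, neg_ne_zero] at h₂

theorem IsRep.mnr_ne_zero_iff {B : Set (Finset V)} (hM : IsRep B M) {a b : V} (hab : a ≠ b) :
    mnr M a b ≠ 0 ↔ {a, b} ∈ B := by
  rcases hab.lt_or_gt with h | h
  · exact hM a b h
  · rw [Finset.pair_comm, mnr_swap, neg_ne_zero]
    exact hM b a h

theorem IsRep.mnr_eq_zero {B : Set (Finset V)} (hM : IsRep B M) {a b : V} (h : {a, b} ∉ B) :
    mnr M a b = 0 := by
  by_cases hab : a = b
  · rw [hab, mnr_self]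
  · exact of_not_not fun h0 => h ((hM.mnr_ne_zero_iff hab).1 h0)

theorem rank_eq_two_of_mnr_ne_zero {a b : V} (h : mnr M a b ≠ 0) : M.rank = 2 := by
  refine le_antisymm (by simpa using M.rank_le_card_height) ?_
  have h2 : (M.submatrix id ![a, b]).rank = 2 := by
    rw [Matrix.rank_of_isUnit]
    · simp
    · rw [Matrix.isUnit_iff_isUnit_det, isUnit_iff_ne_zero, Matrix.det_fin_two]
      simpa [mnr, Matrix.submatrix_apply] using h
  have hle := Matrix.rank_mul_le_left M ((1 : Matrix V V ℝ).submatrix (Equiv.refl V) ![a, b])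
  rw [Matrix.mul_submatrix_one (Equiv.refl V) ![a, b]] at hle
  simp only [Equiv.refl_symm, Equiv.coe_refl, Function.id_comp] at hle
  omega

end Minors

def boundaryCell (i : V) : Finset (Finset V) := crossPairs {i, i + 1} Finset.univ

def mnrInt (N : Matrix (Fin 2) V ℤ) (a b : V) : ℤ := N 0 a * N 1 b - N 0 b * N 1 a

theorem mnr_map_intCast (N : Matrix (Fin 2) V ℤ) (a b : V) :
    mnr (N.map (↑)) a b = mnrInt N a b := by
  simp only [mnr, mnrInt, Matrix.map_apply]
  push_cast
  ring

/-- Read cyclically from `i`, the columns are `(1,0), (1,1), (0,1), …, (0,1)`; the columns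
that wrap around past `6` are negated, which keeps the minors in the order of `Fin 6`
nonnegative. -/
def boundaryMatrixInt (i : V) : Matrix (Fin 2) V ℤ :=
  Matrix.of fun r j =>
    (if j < i then -1 else 1) *
      (if r = 0 then (if j = i ∨ j = i + 1 then 1 else 0) else (if j = i then 0 else 1))

theorem mnrInt_boundaryMatrixInt_nonneg :
    ∀ i a b : V, a < b → 0 ≤ mnrInt (boundaryMatrixInt i) a b := by
  decide

theorem mnrInt_boundaryMatrixInt_ne_zero_iff :
    ∀ i a b : V, a < b → (mnrInt (boundaryMatrixInt i) a b ≠ 0 ↔ {a, b} ∈ boundaryCell i) := by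
  decide

theorem mnrInt_boundaryMatrixInt_self_succ :
    ∀ i : V, mnrInt (boundaryMatrixInt i) i (i + 1) ≠ 0 := by
  decide

theorem isPositroid_boundaryCell (i : V) : IsPositroid ↑(boundaryCell i) := by
  set M : Matrix (Fin 2) V ℝ := (boundaryMatrixInt i).map (↑)
  refine ⟨⟨{i, i + 1}, ?_⟩, fun I hI => card_eq_two_of_mem_crossPairs hI, M, ?_, ?_, ?_⟩
  · exact mem_crossPairs.2 ⟨i, by simp, i + 1, Finset.mem_univ _, by simp, rfl⟩
  · refine rank_eq_two_of_mnr_ne_zero (a := i) (b := i + 1) ?_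
    rw [mnr_map_intCast]
    exact_mod_cast mnrInt_boundaryMatrixInt_self_succ i
  · intro a b hab
    rw [mnr_map_intCast]
    exact_mod_cast mnrInt_boundaryMatrixInt_nonneg i a b hab
  · intro a b hab
    rw [mnr_map_intCast, Finset.mem_coe, Int.cast_ne_zero]
    exact mnrInt_boundaryMatrixInt_ne_zero_iff i a b hab

theorem crossPairs_supp_Vdiag : ∀ i : V,
    crossPairs (supp {i, i + 2}) (supp {i, i + 4}) =
      boundaryCell i ∪ crossPairs {i + 2, i + 3} {i + 4, i + 5} := by
  decide

theorem BW_Vdiag (i : V) :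
    BW (Vdiag i) = ↑(boundaryCell i ∪ crossPairs {i + 2, i + 3} {i + 4, i + 5}) := by
  rw [Vdiag, BW_pair ((by decide : ∀ i : V, ({i, i + 2} : Finset V) ≠ {i, i + 4}) i),
    crossPairs_supp_Vdiag]

theorem boundaryCell_ssubset : ∀ i : V,
    boundaryCell i ⊂ boundaryCell i ∪ crossPairs {i + 2, i + 3} {i + 4, i + 5} := by
  decide

theorem pair_notMem_BW_Vdiag : ∀ i : V,
    (∀ s ∈ ({i + 2, i + 3} : Finset V), ∀ s' ∈ ({i + 2, i + 3} : Finset V),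
      {s, s'} ∉ boundaryCell i ∪ crossPairs {i + 2, i + 3} {i + 4, i + 5}) ∧
    (∀ t ∈ ({i + 4, i + 5} : Finset V), ∀ t' ∈ ({i + 4, i + 5} : Finset V),
      {t, t'} ∉ boundaryCell i ∪ crossPairs {i + 2, i + 3} {i + 4, i + 5}) := by
  decide

theorem self_notMem_far_vertices : ∀ i : V, i ∉ ({i + 2, i + 3} ∪ {i + 4, i + 5} : Finset V) := by
  decide

theorem pair_mem_boundaryCell {i j : V} (hj : j ≠ i) : {i, j} ∈ boundaryCell i :=
  mem_crossPairs.2 ⟨i, by simp, j, Finset.mem_univ j, hj.symm, rfl⟩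

theorem maxProperSub_boundaryCell (i : V) : MaxProperSub ↑(boundaryCell i) (BW (Vdiag i)) := by
  set S : Finset V := {i + 2, i + 3}
  set T : Finset V := {i + 4, i + 5}
  rw [BW_Vdiag]
  refine ⟨isPositroid_boundaryCell i, Finset.coe_ssubset.2 (boundaryCell_ssubset i), ?_⟩
  rintro B ⟨-, -, M, -, -, hM⟩ hB hsub
  have hc : ∀ j ∈ S ∪ T, mnr M i j ≠ 0 := fun j hj =>
    have hji : j ≠ i := ne_of_mem_of_not_mem hj (self_notMem_far_vertices i)
    (hM.mnr_ne_zero_iff hji.symm).2 (hsub (pair_mem_boundaryCell hji))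
  have hSS : ∀ s ∈ S, ∀ s' ∈ S, mnr M s s' = 0 := fun s hs s' hs' =>
    hM.mnr_eq_zero fun h => (pair_notMem_BW_Vdiag i).1 s hs s' hs' (hB.1 h)
  have hTT : ∀ t ∈ T, ∀ t' ∈ T, mnr M t t' = 0 := fun t ht t' ht' =>
    hM.mnr_eq_zero fun h => (pair_notMem_BW_Vdiag i).2 t ht t' ht' (hB.1 h)
  refine Set.Subset.antisymm (fun I hI => ?_) hsub
  rcases Finset.mem_union.1 (hB.1 hI) with hI' | hIX
  · exact hI'
  obtain ⟨s, hs, t, ht, hst, rfl⟩ := mem_crossPairs.1 hIX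
  have hmnr : mnr M s t ≠ 0 := (hM.mnr_ne_zero_iff hst).2 hI
  refine absurd (fun J hJ => ?_) hB.2
  rcases Finset.mem_union.1 hJ with hJ' | hJX
  · exact hsub hJ'
  obtain ⟨s', hs', t', ht', hst', rfl⟩ := mem_crossPairs.1 hJX
  refine (hM.mnr_ne_zero_iff hst').1 (mnr_ne_zero_of_parallel_classes
    (fun s hs => hc s (Finset.mem_union_left T hs)) (fun t ht => hc t (Finset.mem_union_right S ht))
    hSS hTT hs hs' ht ht' hmnr)

theorem card_supp_le (p : Finset V) : (supp p).card ≤ 2 * p.card := by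
  have := p.card_image_le (f := (· + 1))
  have := Finset.card_union_le p (p.image (· + 1))
  unfold supp
  omega

theorem eq_Vdiag_or_of_supp : ∀ i x y u v : V, x ≠ y → u ≠ v →
    {i, i + 1} ⊆ supp {x, y} ∩ supp {u, v} → supp {x, y} ∪ supp {u, v} = Finset.univ →
    ({{x, y}, {u, v}} : Finset (Finset V)) = Vdiag i ∨
      ({{x, y}, {u, v}} : Finset (Finset V)) = {{i, i + 3}, {i + 1, i + 5}} := by
  decide

theorem crossing_shift : ∀ i : V, Crossing {i, i + 3} {i + 1, i + 5} := by
  unfold Crossing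
  decide

theorem eq_Vdiag_of_boundaryCell_subset {W : Finset (Finset V)} (hW : Admissible W) {i : V}
    (h : ↑(boundaryCell i) ⊆ BW W) : W = Vdiag i := by
  obtain ⟨⟨hcard, hpairs⟩, -, hcross⟩ := hW
  obtain ⟨p, q, hpq, rfl⟩ := Finset.card_eq_two.1 hcard
  have hsupp : ∀ r ∈ ({p, q} : Finset (Finset V)), (supp r).card + 2 ≤ Fintype.card V :=
    fun r hr => by simpa [hpairs r hr] using card_supp_le r
  obtain ⟨x, y, hxy, rfl⟩ := Finset.card_eq_two.1 (hpairs p (by simp))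
  obtain ⟨u, v, huv, rfl⟩ := Finset.card_eq_two.1 (hpairs q (by simp))
  rw [BW_pair hpq, Finset.coe_subset] at h
  have hpair : ∀ c ∈ ({i, i + 1} : Finset V), ∀ j ≠ c,
      {c, j} ∈ crossPairs (supp {x, y}) (supp {u, v}) := fun c hc j hj =>
    h (mem_crossPairs.2 ⟨c, hc, j, Finset.mem_univ j, hj.symm, rfl⟩)
  have hshared : {i, i + 1} ⊆ supp {x, y} ∩ supp {u, v} := fun c hc =>
    mem_inter_of_forall_pair_mem_crossPairs (hsupp _ (by simp)) (hsupp _ (by simp))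
      (hpair c hc)
  have hcover : supp {x, y} ∪ supp {u, v} = Finset.univ :=
    union_eq_univ_of_forall_pair_mem_crossPairs
      (Finset.mem_inter.1 (hshared (by simp))).1 (hpair i (by simp))
  refine (eq_Vdiag_or_of_supp i x y u v hxy huv hshared hcover).resolve_right fun hX => ?_
  exact hcross _ (hX ▸ by simp) _ (hX ▸ by simp) (crossing_shift i)

end WLD

open WLD in
/-- Each cell `Σ(V_i)` has a codimension-one boundary cell shared with no other
Wilson loop diagram cell. -/
theorem statement16 (i : V) :
    ∃ B : Set (Finset V), MaxProperSub B (BW (Vdiag i)) ∧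
      ∀ W : Finset (Finset V), Admissible W → BW W ≠ BW (Vdiag i) → ¬ B ⊆ BW W :=
  ⟨↑(boundaryCell i), maxProperSub_boundaryCell i,
    fun _ hW hne hsub => hne (by rw [eq_Vdiag_of_boundaryCell_subset hW hsub])⟩
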